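/- There exists a constant C > 0 such that for all α ∈ (0, 1/e) and all x, y ∈ ℝ² with x ≠ y, one has G(x,y;α)² ≤ C·((ln α)² + (ln‖x−y‖)²). -/

import Mathlib

open MeasureTheory

/-- The modified Bessel function of the second kind of order zero,
via its integral representation `K₀(w) = ∫₀^∞ exp(−w·cosh t) dt`. -/
noncomputable def K0 (w : ℝ) : ℝ := ∫ t in Set.Ioi (0 : ℝ), Real.exp (-w * Real.cosh t)

/-- The Green's function of the free resolvent `(-Δ + α²)⁻¹` in two dimensions:
`G(x,y;α) = (1/(2π))·K₀(α‖x−y‖)`. -/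
noncomputable def G (x y : EuclideanSpace ℝ (Fin 2)) (α : ℝ) : ℝ :=
  (1 / (2 * Real.pi)) * K0 (α * ‖x - y‖)

lemma integral_exp_neg_mul_Ioi' {b : ℝ} (hb : 0 < b) (a : ℝ) :
    (∫ x in Set.Ioi a, Real.exp (-b * x)) = Real.exp (-b * a) / b := by
  have := integral_Ioi_of_hasDerivAt_of_tendsto
    (f := fun x => -Real.exp (-b * x) / b) (f' := fun x => Real.exp (-b * x)) (a := a)
    (m := 0) ?_ ?_ (exp_neg_integrableOn_Ioi a hb) ?_
  · rw [this]; ring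
  · exact (((Real.continuous_exp.comp (continuous_const.mul continuous_id)).neg.div_const b)).continuousWithinAt
  · intro x _
    have hinner : HasDerivAt (fun y : ℝ => -b * y) (-b * 1) x := (hasDerivAt_id x).const_mul (-b)
    have : HasDerivAt (fun x => -Real.exp (-b * x) / b) (-(Real.exp (-b*x) * (-b * 1)) / b) x :=
      (((Real.hasDerivAt_exp _).comp x hinner).neg).div_const b
    refine this.congr_deriv ?_
    simp only [div_eq_iff hb.ne']
    ring
  · have : Filter.Tendsto (fun x => -b * x) Filter.atTop Filter.atBot :=
      Filter.tendsto_id.const_mul_atTop_of_neg (by linarith)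
    have := (Real.tendsto_exp_atBot.comp this).neg.div_const b
    simpa using this

lemma cosh_ge_half (t : ℝ) : (1 + t) / 2 ≤ Real.cosh t := by
  have h1 : t + 1 ≤ Real.exp t := Real.add_one_le_exp t
  have h2 : Real.exp t / 2 ≤ Real.cosh t := by
    rw [Real.cosh_eq]
    have := (Real.exp_pos (-t)).le
    linarith
  linarith

lemma integrableOn_K0 {w : ℝ} (hw : 0 < w) (a : ℝ) :
    IntegrableOn (fun t => Real.exp (-w * Real.cosh t)) (Set.Ioi a) := by
  apply Integrable.mono' (exp_neg_integrableOn_Ioi a (half_pos hw))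
  · exact (Real.continuous_exp.comp (continuous_const.mul Real.continuous_cosh)).aestronglyMeasurable
  · filter_upwards with t
    rw [Real.norm_eq_abs, abs_of_pos (Real.exp_pos _)]
    apply Real.exp_le_exp.2
    have := cosh_ge_half t
    nlinarith
lemma K0_nonneg {w : ℝ} (hw : 0 < w) : 0 ≤ K0 w :=
  setIntegral_nonneg measurableSet_Ioi (fun t _ => (Real.exp_pos _).le)

lemma K0_le {w : ℝ} (hw : 0 < w) : K0 w ≤ 2 + |Real.log w| := by
  rcases le_or_gt 1 w with hw1 | hw1
  · -- w ≥ 1 : K0 w ≤ ∫ exp(-t/2) = 2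
    have h1 : K0 w ≤ ∫ t in Set.Ioi (0:ℝ), Real.exp (-(1/2) * t) := by
      apply setIntegral_mono_on (integrableOn_K0 hw 0) (exp_neg_integrableOn_Ioi 0 (by norm_num)) measurableSet_Ioi
      intro t ht
      apply Real.exp_le_exp.2
      have hc := cosh_ge_half t
      have hcpos : 0 < Real.cosh t := Real.cosh_pos t
      nlinarith [Set.mem_Ioi.1 ht]
    rw [integral_exp_neg_mul_Ioi' (by norm_num : (0:ℝ) < 1/2) 0] at h1
    simp at h1
    have : (0:ℝ) ≤ |Real.log w| := abs_nonneg _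
    linarith
  · -- 0 < w < 1
    set T := -Real.log w with hT
    have hlog : Real.log w < 0 := Real.log_neg hw hw1
    have hTpos : 0 < T := by simp [hT]; linarith
    have hsplit : K0 w = (∫ t in Set.Ioc 0 T, Real.exp (-w * Real.cosh t))
        + ∫ t in Set.Ioi T, Real.exp (-w * Real.cosh t) := by
      rw [K0, ← Set.Ioc_union_Ioi_eq_Ioi hTpos.le]
      exact setIntegral_union (Set.Ioc_disjoint_Ioi le_rfl) measurableSet_Ioi
        ((integrableOn_K0 hw 0).mono_set Set.Ioc_subset_Ioi_self) (integrableOn_K0 hw T)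
    have hhead : (∫ t in Set.Ioc 0 T, Real.exp (-w * Real.cosh t)) ≤ T := by
      have : (∫ t in Set.Ioc 0 T, Real.exp (-w * Real.cosh t)) ≤ ∫ _t in Set.Ioc 0 T, (1:ℝ) := by
        apply setIntegral_mono_on ((integrableOn_K0 hw 0).mono_set Set.Ioc_subset_Ioi_self)
          (integrableOn_const measure_Ioc_lt_top.ne) measurableSet_Ioc
        intro t _
        have hcpos : 0 < Real.cosh t := Real.cosh_pos t
        have : 0 ≤ w * Real.cosh t := by positivity
        calc Real.exp (-w * Real.cosh t) ≤ Real.exp 0 := Real.exp_le_exp.2 (by linarith)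
        _ = 1 := Real.exp_zero
      rw [setIntegral_const] at this
      rcases (by simpa [Real.volume_Ioc, ENNReal.toReal_ofReal hTpos.le] using this) with h | h
      · simpa using h
      · simpa using h.trans hTpos.le
    have htail : (∫ t in Set.Ioi T, Real.exp (-w * Real.cosh t)) ≤ 2 := by
      have h1 : (∫ t in Set.Ioi T, Real.exp (-w * Real.cosh t))
          ≤ ∫ t in Set.Ioi T, Real.exp (T/2) * Real.exp (-(1/2) * t) := by
        apply setIntegral_mono_on (integrableOn_K0 hw T)
          ((exp_neg_integrableOn_Ioi T (by norm_num : (0:ℝ) < 1/2)).const_mul _) measurableSet_Ioi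
        intro t ht
        rw [← Real.exp_add]
        apply Real.exp_le_exp.2
        -- w * cosh t ≥ e^{t - T}/2 ≥ (1 + (t-T))/2 ≥ (t - T)/2
        have h2 : Real.exp t / 2 ≤ Real.cosh t := by
          rw [Real.cosh_eq]; have := (Real.exp_pos (-t)).le; linarith
        have h3 : w * (Real.exp t / 2) ≤ w * Real.cosh t :=
          mul_le_mul_of_nonneg_left h2 hw.le
        have h4 : w * Real.exp t = Real.exp (t - T) := by
          rw [hT, sub_neg_eq_add, Real.exp_add, Real.exp_log hw]; ring
        have h5 : (t - T) + 1 ≤ Real.exp (t - T) := Real.add_one_le_exp _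
        have ht' := Set.mem_Ioi.1 ht
        nlinarith
      rw [integral_const_mul, integral_exp_neg_mul_Ioi' (by norm_num : (0:ℝ) < 1/2) T] at h1
      have h0 : Real.exp (T/2) * Real.exp (-(1/2) * T) = 1 := by
        rw [← Real.exp_add, show T / 2 + -(1 / 2) * T = 0 by ring, Real.exp_zero]
      have : Real.exp (T/2) * (Real.exp (-(1/2) * T) / (1/2)) = 2 := by
        calc Real.exp (T/2) * (Real.exp (-(1/2) * T) / (1/2))
            = (Real.exp (T/2) * Real.exp (-(1/2) * T)) * 2 := by ring
          _ = 2 := by rw [h0]; ring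
      linarith [h1, this.le.trans (le_refl 2)]
    have habs : |Real.log w| = T := by rw [abs_of_neg hlog]
    rw [hsplit, habs]
    linarith

/-- There is `C > 0` such that for all `α ∈ (0, 1/e)` and all `x ≠ y` in `ℝ²`:
`G(x,y;α)² ≤ C·((ln α)² + (ln‖x−y‖)²)`. -/
theorem green_bound_iii :
    ∃ C : ℝ, 0 < C ∧ ∀ α : ℝ, α ∈ Set.Ioo (0 : ℝ) (Real.exp 1)⁻¹ →
      ∀ x y : EuclideanSpace ℝ (Fin 2), x ≠ y →
        (G x y α) ^ 2 ≤ C * ((Real.log α) ^ 2 + (Real.log ‖x - y‖) ^ 2) := by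
  refine ⟨15, by norm_num, fun α hα x y hxy => ?_⟩
  obtain ⟨hα0, hα1⟩ := hα
  set r := ‖x - y‖ with hr
  have hr0 : 0 < r := by
    rw [hr, norm_pos_iff]
    exact sub_ne_zero_of_ne hxy
  have hw : 0 < α * r := mul_pos hα0 hr0
  have hK0 := K0_nonneg hw
  have hK := K0_le hw
  have hlogmul : Real.log (α * r) = Real.log α + Real.log r := Real.log_mul hα0.ne' hr0.ne'
  have habs : |Real.log (α * r)| ≤ |Real.log α| + |Real.log r| := by
    rw [hlogmul]; exact abs_add_le _ _
  -- |log α| ≥ 1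
  have hloga : Real.log α < -1 := by
    have := Real.log_lt_log hα0 hα1
    rwa [Real.log_inv, Real.log_exp] at this
  have ha1 : 1 ≤ |Real.log α| := by
    rw [abs_of_neg (by linarith)]
    linarith
  have hb0 : 0 ≤ |Real.log r| := abs_nonneg _
  have hpi : (1:ℝ) ≤ 2 * Real.pi := by
    have := Real.pi_gt_three
    linarith
  have hGsq : (G x y α)^2 ≤ (K0 (α * r))^2 := by
    rw [G, mul_pow]
    have h1 : (1 / (2 * Real.pi))^2 ≤ 1 := by
      rw [div_pow, one_pow]
      rw [div_le_one (by positivity)]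
      nlinarith
    nlinarith [sq_nonneg (K0 (α * r))]
  have hK2 : K0 (α * r) ≤ 2 + |Real.log α| + |Real.log r| := by linarith
  have hsq : (K0 (α * r))^2 ≤ (2 + |Real.log α| + |Real.log r|)^2 := by
    nlinarith
  have hfinal : (2 + |Real.log α| + |Real.log r|)^2 ≤ 15 * ((Real.log α)^2 + (Real.log r)^2) := by
    have h1 : |Real.log α|^2 = (Real.log α)^2 := sq_abs _
    have h2 : |Real.log r|^2 = (Real.log r)^2 := sq_abs _
    nlinarith [sq_nonneg (|Real.log α| - |Real.log r|), sq_nonneg (|Real.log α| + |Real.log r| - 2)]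
  linarith
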